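/- arXiv:2602.23080 — 4 statements merged into one kernel-verified Lean document; each statement's English description precedes it below -/
import Mathlib

section
/- For every R ≥ 0 the set B*_R is reflexive: if T ∈ B(H) is such that for all orthogonal projections P, Q lying in the von Neumann algebra A'' generated by A one has (P S Q = 0 for every S ∈ B*_R) ⟹ P T Q = 0, then T ∈ B*_R. -/
open scoped ENNReal NNReal

noncomputable section SpectralProjections

variable {H : Type*} [NormedAddCommGroup H] [InnerProductSpace ℂ H] [CompleteSpace H]

/-- The closed subspace of vectors whose spectral measure (for the self-adjoint operator `a`)
is supported in the closed set `S`: the vectors killed by `g(a)` for every continuous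
`g : ℝ → ℝ` vanishing on `S`.  (Applied below only to closed sets `S`, for which this is
precisely the range of the spectral projection `χ_S(a)`.) -/
def spectralSubspace (a : H →L[ℂ] H) (S : Set ℝ) : Submodule ℂ H :=
  (⨅ g : {g : ℝ → ℝ // Continuous g ∧ ∀ x ∈ S, g x = 0},
    LinearMap.ker ((cfc (g : ℝ → ℝ) a : H →L[ℂ] H) : H →ₗ[ℂ] H)).topologicalClosure

instance (a : H →L[ℂ] H) (S : Set ℝ) : CompleteSpace (spectralSubspace a S) :=
  (Submodule.isClosed_topologicalClosure _).completeSpace_coe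

/-- The spectral projection `χ_{(-∞, r]}(a)` of a (self-adjoint) bounded operator `a`,
realized as the orthogonal projection onto the corresponding spectral subspace. -/
def specProjIic (a : H →L[ℂ] H) (r : ℝ) : H →L[ℂ] H :=
  (spectralSubspace a (Set.Iic r)).subtypeL ∘L (spectralSubspace a (Set.Iic r)).orthogonalProjectionOnto

/-- The spectral projection `χ_{[r, ∞)}(a)`. -/
def specProjIci (a : H →L[ℂ] H) (r : ℝ) : H →L[ℂ] H :=
  (spectralSubspace a (Set.Ici r)).subtypeL ∘L (spectralSubspace a (Set.Ici r)).orthogonalProjectionOnto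

/-- The spectral projection `χ_{(r, ∞)}(a)`. -/
def specProjIoi (a : H →L[ℂ] H) (r : ℝ) : H →L[ℂ] H := 1 - specProjIic a r

/-- The spectral projection `χ_{(-∞, r)}(a)`. -/
def specProjIio (a : H →L[ℂ] H) (r : ℝ) : H →L[ℂ] H := 1 - specProjIci a r

variable (dom : Set (H →L[ℂ] H)) (L : (H →L[ℂ] H) → ℝ)

/-- `T` has spectral propagation at most `R` (with respect to the Lipschitz data `(dom, L)`):
`χ_{(-∞,0]}(a) T χ_{(R,∞)}(a) = 0` for every self-adjoint `a ∈ dom` with `L a ≤ 1`. -/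
def HasSpecPropLE (T : H →L[ℂ] H) (R : ℝ) : Prop :=
  ∀ a ∈ dom, IsSelfAdjoint a → L a ≤ 1 →
    specProjIic a 0 * T * specProjIoi a R = 0

/-- The spectral propagation of `T`, an extended nonnegative real
(`∞` if `T` has no finite propagation bound). -/
def specPropagation (T : H →L[ℂ] H) : ℝ≥0∞ :=
  ⨅ (R : ℝ≥0) (_ : HasSpecPropLE dom L T R), (R : ℝ≥0∞)

end SpectralProjections

variable {H : Type*} [NormedAddCommGroup H] [InnerProductSpace ℂ H] [CompleteSpace H]

/-- The commutant of a set of bounded operators. -/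
def setCommutant (S : Set (H →L[ℂ] H)) : Set (H →L[ℂ] H) :=
  {T | ∀ s ∈ S, s * T = T * s}

/-! A spectral subspace of `a` is invariant under every operator commuting with `a`, and an
orthogonal projection commutes with `b` as soon as its range is invariant under `b` and `b†`.
Hence the spectral projections of `a` lie in the commutant of every star-closed set that `a`
commutes with; for `a ∈ dom ⊆ A''` this puts `χ_{(-∞,0]}(a)` and `χ_{(R,∞)}(a)` in `A''`, and
the hypothesis on `T` applied to this pair is exactly the propagation condition at `a`. -/

open ContinuousLinearMap Module.End

theorem Submodule.commute_starProjection_of_mem_invtSubmodule {𝕜 E : Type*} [RCLike 𝕜]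
    [NormedAddCommGroup E] [InnerProductSpace 𝕜 E] [CompleteSpace E] {K : Submodule 𝕜 E}
    [K.HasOrthogonalProjection] {T : E →L[𝕜] E} (hT : K ∈ invtSubmodule T.toLinearMap)
    (hT' : K ∈ invtSubmodule (adjoint T).toLinearMap) :
    Commute K.starProjection T := by
  rw [K.isIdempotentElem_starProjection.commute_iff, K.range_starProjection, K.ker_starProjection]
  exact ⟨hT, orthogonal_mem_invtSubmodule hT'⟩

theorem spectralSubspace_mem_invtSubmodule {a b : H →L[ℂ] H} (hab : Commute a b) (S : Set ℝ) :
    spectralSubspace a S ∈ invtSubmodule b.toLinearMap := by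
  refine Submodule.topologicalClosure_mem_invtSubmodule ?_
  simp only [mem_invtSubmodule_iff_forall_mem_of_mem, Submodule.mem_iInf, LinearMap.mem_ker,
    coe_coe]
  intro x hx g
  have hg : cfc (g : ℝ → ℝ) a (b x) = b (cfc (g : ℝ → ℝ) a x) :=
    congr($((hab.cfc_real g).eq) x)
  rw [hg, hx g, map_zero]

theorem specProjIic_commute {a b : H →L[ℂ] H} (hab : Commute a b) (hab' : Commute a (adjoint b))
    (r : ℝ) : Commute (specProjIic a r) b :=
  Submodule.commute_starProjection_of_mem_invtSubmodule
    (spectralSubspace_mem_invtSubmodule hab _) (spectralSubspace_mem_invtSubmodule hab' _)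

theorem isStarProjection_specProjIic (a : H →L[ℂ] H) (r : ℝ) :
    IsStarProjection (specProjIic a r) :=
  isStarProjection_starProjection

theorem isStarProjection_specProjIoi (a : H →L[ℂ] H) (r : ℝ) :
    IsStarProjection (specProjIoi a r) :=
  (isStarProjection_specProjIic a r).one_sub

theorem specProjIic_mem_setCommutant {S : Set (H →L[ℂ] H)} (hS : ∀ s ∈ S, adjoint s ∈ S)
    {a : H →L[ℂ] H} (ha : a ∈ setCommutant S) (r : ℝ) : specProjIic a r ∈ setCommutant S :=
  fun s hs ↦ (specProjIic_commute (ha s hs).symm (ha _ (hS s hs)).symm r).symm.eq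

theorem specProjIoi_mem_setCommutant {S : Set (H →L[ℂ] H)} (hS : ∀ s ∈ S, adjoint s ∈ S)
    {a : H →L[ℂ] H} (ha : a ∈ setCommutant S) (r : ℝ) : specProjIoi a r ∈ setCommutant S :=
  fun s hs ↦ ((Commute.one_right s).sub_right (specProjIic_mem_setCommutant hS ha r s hs)).eq

theorem Set.add_smul_one_mem_centralizer_centralizer {R A : Type*} [CommSemiring R] [Semiring A]
    [Algebra R A] {s : Set A} {b : A} (hb : b ∈ s) (c : R) :
    b + c • (1 : A) ∈ s.centralizer.centralizer :=
  show _ ∈ Subalgebra.centralizer R s.centralizer from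
    add_mem (subset_centralizer_centralizer hb) (Subalgebra.smul_mem _ (one_mem _) c)

theorem propLE_reflexive_general
    (A : Set (H →L[ℂ] H)) (dom : Set (H →L[ℂ] H)) (L : (H →L[ℂ] H) → ℝ)
    (hAstar : ∀ a ∈ A, ContinuousLinearMap.adjoint a ∈ A)
    (hdom : ∀ a ∈ dom, IsSelfAdjoint a ∧ ∃ b ∈ A, ∃ c : ℂ, a = b + c • (1 : H →L[ℂ] H))
    (R : ℝ) (T : H →L[ℂ] H)
    (hT : ∀ P Q : H →L[ℂ] H,
      P ∈ setCommutant (setCommutant A) → Q ∈ setCommutant (setCommutant A) →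
      IsSelfAdjoint P → IsIdempotentElem P → IsSelfAdjoint Q → IsIdempotentElem Q →
      (∀ S : H →L[ℂ] H, HasSpecPropLE dom L S R → P * S * Q = 0) → P * T * Q = 0) :
    HasSpecPropLE dom L T R := by
  intro a ha hsa hLa
  have hA' : ∀ b ∈ setCommutant A, adjoint b ∈ setCommutant A :=
    fun _ ↦ Set.star_mem_centralizer' hAstar
  have ha'' : a ∈ setCommutant (setCommutant A) := by
    obtain ⟨-, b, hb, c, rfl⟩ := hdom a ha
    exact Set.add_smul_one_mem_centralizer_centralizer hb c
  have hP := isStarProjection_specProjIic a 0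
  have hQ := isStarProjection_specProjIoi a R
  exact hT _ _ (specProjIic_mem_setCommutant hA' ha'' 0) (specProjIoi_mem_setCommutant hA' ha'' R)
    hP.isSelfAdjoint hP.isIdempotentElem hQ.isSelfAdjoint hQ.isIdempotentElem
    fun S hS ↦ hS a ha hsa hLa

/-- For every `R ≥ 0` the set `B*_R` is reflexive: if `T ∈ B(H)` is such that
for all orthogonal projections `P, Q` in the von Neumann algebra `A''` generated by `A` one has
`(P S Q = 0 for every S ∈ B*_R) ⟹ P T Q = 0`, then `T ∈ B*_R`. -/
theorem propLE_reflexive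
    (A : Set (H →L[ℂ] H)) (dom : Set (H →L[ℂ] H)) (L : (H →L[ℂ] H) → ℝ)
    (hAstar : ∀ a ∈ A, ContinuousLinearMap.adjoint a ∈ A)
    (hdom : ∀ a ∈ dom, IsSelfAdjoint a ∧ ∃ b ∈ A, ∃ c : ℂ, a = b + c • (1 : H →L[ℂ] H))
    (R : ℝ) (hR : 0 ≤ R) (T : H →L[ℂ] H)
    (hT : ∀ P Q : H →L[ℂ] H,
      P ∈ setCommutant (setCommutant A) → Q ∈ setCommutant (setCommutant A) →
      IsSelfAdjoint P → IsIdempotentElem P → IsSelfAdjoint Q → IsIdempotentElem Q →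
      (∀ S : H →L[ℂ] H, HasSpecPropLE dom L S R → P * S * Q = 0) → P * T * Q = 0) :
    HasSpecPropLE dom L T R :=
  propLE_reflexive_general A dom L hAstar hdom R T hT
end

section
/- Let A₀, …, A_n be unital C*-algebras, L_k a seminorm on the self-adjoint part sa(A_k) of A_k with L_k(1) = 0, and φ_k a state on A_k, such that for every C > 0 and every k the set {a ∈ sa(A_k) : L_k(a) ≤ 1, |φ_k(a)| ≤ C} is totally bounded in A_k. Let R₀, …, R_{n−1} > 0. Then the set {(a₀, …, a_n) ∈ ∏_k sa(A_k) : L_k(a_k) ≤ 1 for all k, |φ_{k+1}(a_{k+1}) − φ_k(a_k)| ≤ R_k for all k < n, and φ₀(a₀) = 0} is totally bounded in the product ∏_k A_k equipped with the maximum norm. -/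
/-! Since `φ₀ (a₀) = 0`, the triangle inequality along the chain `0, 1, …, k` gives
`‖φ_k (a_k)‖ ≤ R₀ + ⋯ + R_{k-1}`. Hence the set lies in the product over `k` of the sets
`{a ∈ sa(A_k) : L_k a ≤ 1, ‖φ_k a‖ ≤ |R₀ + ⋯ + R_{k-1}| + 1}`, each totally bounded by
hypothesis, and a product of totally bounded sets is totally bounded. -/

open Filter

theorem TotallyBounded.univ_pi {ι : Type*} {X : ι → Type*} [∀ i, UniformSpace (X i)]
    {s : ∀ i, Set (X i)} (hs : ∀ i, TotallyBounded (s i)) : TotallyBounded (Set.univ.pi s) := by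
  rw [totallyBounded_iff_ultrafilter]
  intro f hf
  refine (cauchy_pi_iff' X).2 fun i => ?_
  refine totallyBounded_iff_ultrafilter.1 (hs i) (f.map (Function.eval i)) ?_
  exact le_principal_iff.2 <| mem_map.2 <|
    mem_of_superset (le_principal_iff.1 hf) fun x hx => Set.mem_univ_pi.1 hx i

theorem Fin.dist_le_partialSum_of_dist_le {α : Type*} [PseudoMetricSpace α] {n : ℕ}
    {f : Fin (n + 1) → α} {d : Fin n → ℝ} (hd : ∀ k, dist (f k.castSucc) (f k.succ) ≤ d k)
    (k : Fin (n + 1)) : dist (f 0) (f k) ≤ Fin.partialSum d k := by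
  induction k using Fin.inductionOn with
  | zero => simp
  | succ k ih =>
    calc dist (f 0) (f k.succ) ≤ dist (f 0) (f k.castSucc) + dist (f k.castSucc) (f k.succ) :=
          dist_triangle _ _ _
      _ ≤ Fin.partialSum d k.castSucc + d k := add_le_add ih (hd k)
      _ = Fin.partialSum d k.succ := (Fin.partialSum_succ d k).symm

theorem totallyBounded_coarse_disjoint_union_general
    {n : ℕ} {A : Fin (n + 1) → Type*}
    [∀ k, NormedRing (A k)] [∀ k, StarRing (A k)]
    [∀ k, NormedAlgebra ℂ (A k)]
    (L : ∀ k, A k → ℝ)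
    (φ : ∀ k, A k →ₗ[ℂ] ℂ)
    (hTB : ∀ C > (0 : ℝ), ∀ k,
      TotallyBounded {a : A k | IsSelfAdjoint a ∧ L k a ≤ 1 ∧ ‖φ k a‖ ≤ C})
    (R : Fin n → ℝ) :
    TotallyBounded {a : ∀ k, A k |
      (∀ k, IsSelfAdjoint (a k)) ∧ (∀ k, L k (a k) ≤ 1) ∧
      (∀ k : Fin n, ‖φ k.succ (a k.succ) - φ k.castSucc (a k.castSucc)‖ ≤ R k) ∧
      φ 0 (a 0) = 0} := by
  set C : Fin (n + 1) → ℝ := fun k => |Fin.partialSum R k| + 1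
  refine (TotallyBounded.univ_pi fun k => hTB (C k) (by positivity) k).subset ?_
  rintro a ⟨hsa, hL, hgap, h0⟩ k -
  refine ⟨hsa k, hL k, ?_⟩
  have hdist : dist (φ 0 (a 0)) (φ k (a k)) ≤ Fin.partialSum R k :=
    Fin.dist_le_partialSum_of_dist_le (f := fun k => φ k (a k))
      (fun j => by rw [dist_comm, dist_eq_norm]; exact hgap j) k
  rw [h0, dist_zero_left] at hdist
  exact hdist.trans ((le_abs_self _).trans (lt_add_one _).le)

/-- Let `A₀, …, A_n` be unital C*-algebras, `L_k` a seminorm on the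
self-adjoint part of `A_k` with `L_k 1 = 0`, and `φ_k` a state on `A_k`, such that for every
`C > 0` and every `k` the set `{a ∈ sa(A_k) : L_k a ≤ 1, |φ_k a| ≤ C}` is totally bounded.
Let `R₀, …, R_{n−1} > 0`.  Then the set of tuples `(a₀, …, a_n)` of self-adjoint elements with
`L_k (a_k) ≤ 1`, `|φ_{k+1}(a_{k+1}) − φ_k(a_k)| ≤ R_k` and `φ₀ (a₀) = 0` is totally bounded in
the product (with the maximum norm / product uniformity). -/
theorem totallyBounded_coarse_disjoint_union
    {n : ℕ} {A : Fin (n + 1) → Type*}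
    [∀ k, NormedRing (A k)] [∀ k, StarRing (A k)] [∀ k, CStarRing (A k)]
    [∀ k, NormedAlgebra ℂ (A k)] [∀ k, CompleteSpace (A k)] [∀ k, StarModule ℂ (A k)]
    (L : ∀ k, A k → ℝ)
    (hL1 : ∀ k, L k 1 = 0)
    (hLadd : ∀ k, ∀ a b : A k, IsSelfAdjoint a → IsSelfAdjoint b →
      L k (a + b) ≤ L k a + L k b)
    (hLsmul : ∀ k, ∀ a : A k, ∀ t : ℝ, IsSelfAdjoint a → L k (t • a) = |t| * L k a)
    (φ : ∀ k, A k →ₗ[ℂ] ℂ)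
    (hφ1 : ∀ k, φ k 1 = 1)
    (hφpos : ∀ k, ∀ a : A k, 0 ≤ ((φ k) (star a * a)).re ∧ ((φ k) (star a * a)).im = 0)
    (hTB : ∀ C > (0 : ℝ), ∀ k,
      TotallyBounded {a : A k | IsSelfAdjoint a ∧ L k a ≤ 1 ∧ ‖φ k a‖ ≤ C})
    (R : Fin n → ℝ) (hR : ∀ k, 0 < R k) :
    TotallyBounded {a : ∀ k, A k |
      (∀ k, IsSelfAdjoint (a k)) ∧ (∀ k, L k (a k) ≤ 1) ∧
      (∀ k : Fin n, ‖φ k.succ (a k.succ) - φ k.castSucc (a k.castSucc)‖ ≤ R k) ∧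
      φ 0 (a 0) = 0} :=
  totallyBounded_coarse_disjoint_union_general L φ hTB R
end

section
/- Let D and a be bounded operators on a complex Hilbert space H with D self-adjoint, and let g : ℝ → ℂ be integrable with ∫_ℝ |t|·|g(t)| dt < ∞. Let Φ = ∫_ℝ g(t) e^{itD} dt (a Bochner integral in B(H), which exists since ‖g(t)e^{itD}‖ = |g(t)|). Then ‖[Φ, a]‖ ≤ (∫_ℝ |t|·|g(t)| dt) · ‖[D,a]‖. -/
/-!
Commutation with `a` is a bounded linear map, so it passes through the Bochner integral and
`‖[Φ, a]‖ ≤ ∫ |g t| ‖[e^{itD}, a]‖ dt`. The path `s ↦ e^{isD} a e^{i(t-s)D}` joins `a e^{itD}` to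
`e^{itD} a` with derivative `e^{isD} i[D, a] e^{i(t-s)D}`, of norm at most `‖[D, a]‖` because the
`e^{isD}` are unitary; the mean value inequality gives `‖[e^{itD}, a]‖ ≤ |t| ‖[D, a]‖`.
-/

open NormedSpace MeasureTheory Complex

section BanachAlgebra

variable {𝔸 : Type*} [NormedRing 𝔸] [NormedAlgebra ℝ 𝔸] [CompleteSpace 𝔸]

theorem norm_exp_smul_mul_sub_mul_exp_smul_le {x : 𝔸} (hx : ∀ s : ℝ, ‖exp (s • x)‖ ≤ 1)
    (a : 𝔸) (t : ℝ) :
    ‖exp (t • x) * a - a * exp (t • x)‖ ≤ |t| * ‖x * a - a * x‖ := by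
  set U : ℝ → 𝔸 := fun s => exp (s • x)
  have hderiv : ∀ s, HasDerivAt (fun s => U s * a * U (t - s))
      (U s * (x * a - a * x) * U (t - s)) s := by
    intro s
    have hU_rev : HasDerivAt (fun s => U (t - s)) (-(x * U (t - s))) s := by
      simpa [U, Function.comp_def] using
        (hasDerivAt_exp_smul_const' x (t - s)).scomp s ((hasDerivAt_id s).const_sub t)
    refine (((hasDerivAt_exp_smul_const x s).mul_const a).mul hU_rev).congr_deriv ?_
    simp only [U]
    noncomm_ring
  have hbound : ∀ s, ‖U s * (x * a - a * x) * U (t - s)‖ ≤ ‖x * a - a * x‖ := fun s =>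
    calc _ ≤ ‖U s‖ * ‖x * a - a * x‖ * ‖U (t - s)‖ := norm_mul₃_le
      _ ≤ 1 * ‖x * a - a * x‖ * 1 := by gcongr <;> exact hx _
      _ = ‖x * a - a * x‖ := by ring
  have := convex_univ.norm_image_sub_le_of_norm_hasDerivWithin_le
    (fun s _ => (hderiv s).hasDerivWithinAt) (fun s _ => hbound s) (Set.mem_univ 0)
    (Set.mem_univ t)
  simpa [U, Real.norm_eq_abs, mul_comm] using this

end BanachAlgebra

section CStarAlgebra

variable {A : Type*} [CStarAlgebra A]

theorem norm_le_one_of_mem_unitary {u : A} (hu : u ∈ unitary A) : ‖u‖ ≤ 1 := by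
  rcases subsingleton_or_nontrivial A with _ | _
  · simp [Subsingleton.elim u 0]
  · exact (CStarRing.norm_of_mem_unitary hu).le

theorem IsSelfAdjoint.exp_smul_I_smul_mem_unitary {d : A} (hd : IsSelfAdjoint d) (s : ℝ) :
    NormedSpace.exp (s • I • d) ∈ unitary A := by
  simpa only [selfAdjoint.expUnitary_coe, smul_comm I s d] using
    (selfAdjoint.expUnitary ⟨s • d, (IsSelfAdjoint.all s).smul hd⟩).2

theorem IsSelfAdjoint.norm_exp_smul_I_smul_mul_sub_mul_le {d : A} (hd : IsSelfAdjoint d)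
    (a : A) (t : ℝ) :
    ‖NormedSpace.exp (t • I • d) * a - a * NormedSpace.exp (t • I • d)‖ ≤
      |t| * ‖d * a - a * d‖ := by
  have hcomm : (I • d) * a - a * (I • d) = I • (d * a - a * d) := by
    rw [smul_mul_assoc, mul_smul_comm, smul_sub]
  have := norm_exp_smul_mul_sub_mul_exp_smul_le
    (fun s => norm_le_one_of_mem_unitary (hd.exp_smul_I_smul_mem_unitary s)) a t
  rwa [hcomm, norm_smul, norm_I, one_mul] at this

end CStarAlgebra

theorem integral_mul_sub_mul_integral {X A : Type*} [MeasurableSpace X] {μ : Measure X}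
    [NormedRing A] [NormedAlgebra ℝ A] {f : X → A} (hf : Integrable f μ) (a : A) :
    (∫ x, f x ∂μ) * a - a * ∫ x, f x ∂μ = ∫ x, (f x * a - a * f x) ∂μ := by
  rw [integral_sub (hf.mul_const a) (hf.const_mul a), integral_mul_const_of_integrable hf,
    integral_const_mul_of_integrable hf]

/-- Let `D, a` be bounded operators on a complex Hilbert space `H` with `D`
self-adjoint, and let `g : ℝ → ℂ` be integrable with `∫ |t|·|g t| dt < ∞`.  Let
`Φ = ∫ g t · e^{itD} dt` (a Bochner integral in `B(H)`).  Then
`‖[Φ, a]‖ ≤ (∫ |t|·|g t| dt) · ‖[D, a]‖`. -/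
theorem norm_commutator_integral_exp_le
    {H : Type*} [NormedAddCommGroup H] [InnerProductSpace ℂ H] [CompleteSpace H]
    (D a : H →L[ℂ] H) (hD : IsSelfAdjoint D) (g : ℝ → ℂ)
    (hg : Integrable g) (hg' : Integrable (fun t : ℝ => |t| * ‖g t‖)) :
    ‖(∫ t : ℝ, g t • NormedSpace.exp (((t : ℂ) * Complex.I) • D)) * a -
        a * ∫ t : ℝ, g t • NormedSpace.exp (((t : ℂ) * Complex.I) • D)‖ ≤
      (∫ t : ℝ, |t| * ‖g t‖) * ‖D * a - a * D‖ := by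
  simp only [mul_smul, coe_smul]
  set U : ℝ → H →L[ℂ] H := fun t => exp (t • I • D)
  have hU_cont : Continuous U := (differentiable_exp_smul_const ℝ (I • D)).continuous
  have hint : Integrable fun t => g t • U t :=
    hg.smul_bdd 1 hU_cont.aestronglyMeasurable
      (ae_of_all _ fun t => norm_le_one_of_mem_unitary (hD.exp_smul_I_smul_mem_unitary t))
  rw [integral_mul_sub_mul_integral hint, ← integral_mul_const]
  refine norm_integral_le_of_norm_le (hg'.mul_const _) (ae_of_all _ fun t => ?_)
  calc ‖g t • U t * a - a * (g t • U t)‖ = ‖g t‖ * ‖U t * a - a * U t‖ := by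
        rw [smul_mul_assoc, mul_smul_comm, ← smul_sub, norm_smul]
    _ ≤ ‖g t‖ * (|t| * ‖D * a - a * D‖) := by
        gcongr; exact hD.norm_exp_smul_I_smul_mul_sub_mul_le a t
    _ = |t| * ‖g t‖ * ‖D * a - a * D‖ := by ring
end

section
/- Let A be a C*-algebra with unitization uA, L a seminorm on a linear subspace dom(L) of the self-adjoint part of uA, μ a linear functional on uA, and e ∈ A with ‖e‖ ≤ 1. Suppose that for every ε > 0 there exists e' ∈ A with ‖e'‖ ≤ 1, e·e' = e, ‖[e', a]‖ ≤ ε·L(a) for all a ∈ dom(L), and such that the set {e·a·e' : a ∈ dom(L), L(a) ≤ 1, μ(a) = 0} is totally bounded in A. Then the set {e·a : a ∈ dom(L), L(a) ≤ 1, μ(a) = 0} is totally bounded in A. -/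
/-- Let `A` be a C*-algebra with unitization `uA`, `L` a seminorm on a linear
subspace `dom` of the self-adjoint part of `uA`, `μ` a linear functional on `uA`, and `e ∈ A`
with `‖e‖ ≤ 1`.  Suppose that for every `ε > 0` there exists `e' ∈ A` with `‖e'‖ ≤ 1`,
`e * e' = e`, `‖[e', a]‖ ≤ ε · L a` for all `a ∈ dom`, and such that the set
`{e·a·e' : a ∈ dom, L a ≤ 1, μ a = 0}` is totally bounded.  Then the set
`{e·a : a ∈ dom, L a ≤ 1, μ a = 0}` is totally bounded. -/
theorem totallyBounded_cut_approx
    {A : Type*} [NonUnitalNormedRing A] [StarRing A] [CStarRing A] [NormedSpace ℂ A]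
    [IsScalarTower ℂ A A] [SMulCommClass ℂ A A] [StarModule ℂ A] [CompleteSpace A]
    (dom : Set (Unitization ℂ A)) (hdom : ∀ a ∈ dom, IsSelfAdjoint a)
    (L : Unitization ℂ A → ℝ) (μ : Unitization ℂ A →ₗ[ℂ] ℂ)
    (e : A) (he : ‖e‖ ≤ 1)
    (happrox : ∀ ε > (0 : ℝ), ∃ e' : A, ‖e'‖ ≤ 1 ∧ e * e' = e ∧
      (∀ a ∈ dom, ‖(e' : Unitization ℂ A) * a - a * (e' : Unitization ℂ A)‖ ≤ ε * L a) ∧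
      TotallyBounded {x : Unitization ℂ A |
        ∃ a ∈ dom, L a ≤ 1 ∧ μ a = 0 ∧ x = (e : Unitization ℂ A) * a * (e' : Unitization ℂ A)}) :
    TotallyBounded {x : Unitization ℂ A |
      ∃ a ∈ dom, L a ≤ 1 ∧ μ a = 0 ∧ x = (e : Unitization ℂ A) * a} := by
  rw [Metric.totallyBounded_iff]
  intro ε hε
  obtain ⟨e', he', hee', hcomm, hTB⟩ := happrox (ε / 2) (by positivity)
  rw [Metric.totallyBounded_iff] at hTB
  obtain ⟨t, htfin, ht⟩ := hTB (ε / 2) (by positivity)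
  refine ⟨t, htfin, ?_⟩
  rintro x ⟨a, ha, hL, hμ, rfl⟩
  have hmem : (e : Unitization ℂ A) * a * (e' : Unitization ℂ A) ∈
      {x : Unitization ℂ A | ∃ a ∈ dom, L a ≤ 1 ∧ μ a = 0 ∧
        x = (e : Unitization ℂ A) * a * (e' : Unitization ℂ A)} := ⟨a, ha, hL, hμ, rfl⟩
  obtain ⟨y, hy, hxy⟩ := Set.mem_iUnion₂.1 (ht hmem)
  refine Set.mem_iUnion₂.2 ⟨y, hy, ?_⟩
  rw [Metric.mem_ball] at hxy ⊢
  have hee'' : (e : Unitization ℂ A) * (e' : Unitization ℂ A) = (e : Unitization ℂ A) := by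
    rw [← Unitization.inr_mul, hee']
  have heq : (e : Unitization ℂ A) * a - (e : Unitization ℂ A) * a * (e' : Unitization ℂ A)
      = (e : Unitization ℂ A) * ((e' : Unitization ℂ A) * a - a * (e' : Unitization ℂ A)) := by
    rw [mul_sub, ← mul_assoc, hee'', ← mul_assoc]
  have hne : ‖(e : Unitization ℂ A)‖ ≤ 1 := by rwa [Unitization.norm_inr]
  have key : ‖(e : Unitization ℂ A) * a
      - (e : Unitization ℂ A) * a * (e' : Unitization ℂ A)‖ ≤ ε / 2 := by
    rw [heq]
    calc ‖(e : Unitization ℂ A) * ((e' : Unitization ℂ A) * a - a * (e' : Unitization ℂ A))‖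
        ≤ ‖(e : Unitization ℂ A)‖ * ‖(e' : Unitization ℂ A) * a - a * (e' : Unitization ℂ A)‖ :=
          norm_mul_le _ _
      _ ≤ 1 * (ε / 2 * L a) := by
          exact mul_le_mul hne (hcomm a ha) (norm_nonneg _) zero_le_one
      _ ≤ 1 * (ε / 2 * 1) := by
          gcongr
      _ = ε / 2 := by ring
  calc dist ((e : Unitization ℂ A) * a) y
      ≤ dist ((e : Unitization ℂ A) * a) ((e : Unitization ℂ A) * a * (e' : Unitization ℂ A))
        + dist ((e : Unitization ℂ A) * a * (e' : Unitization ℂ A)) y := dist_triangle _ _ _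
    _ < ε / 2 + ε / 2 := by
        apply add_lt_add_of_le_of_lt _ hxy
        rw [dist_eq_norm]; exact key
    _ = ε := by ring
end
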